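/- arXiv:2107.08480 — 2 statements merged into one kernel-verified Lean document; each statement's English description precedes it below -/
import Mathlib

section
/- Let π be a permutation of {1,...,n} and let M be an induced matching in G(π), viewed as a set of matches (pairs (x,y) with x < y and π⁻¹(x) > π⁻¹(y)). Then the matches in M are pairwise comparable under the relation e < e' (defined as y < x' and π⁻¹(x) < π⁻¹(y')); that is, M can be ordered as a chain. -/
def permGraph {n : ℕ} (π : Equiv.Perm (Fin n)) : SimpleGraph (Fin n) where
  Adj u v := (u < v ∧ π.symm v < π.symm u) ∨ (v < u ∧ π.symm u < π.symm v)
  symm := ⟨by intro u v h; tauto⟩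
  loopless := ⟨by intro u h; rcases h with ⟨h, _⟩ | ⟨h, _⟩ <;> exact lt_irrefl u h⟩

def IsMatch {n : ℕ} (π : Equiv.Perm (Fin n)) (x y : Fin n) : Prop :=
  x < y ∧ π.symm y < π.symm x

def MatchLT {n : ℕ} (π : Equiv.Perm (Fin n)) (e e' : Fin n × Fin n) : Prop :=
  e.2 < e'.1 ∧ π.symm e.1 < π.symm e'.2

def IsInducedMatching {V : Type*} (G : SimpleGraph V) (M : Set (Sym2 V)) : Prop :=
  M ⊆ G.edgeSet ∧
    ∀ e ∈ M, ∀ f ∈ M, e ≠ f → ∀ u ∈ e, ∀ v ∈ f, u ≠ v ∧ ¬ G.Adj u v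

/-!
Two endpoints lying on distinct edges of an induced matching are non-adjacent in `G(π)`, so
`π⁻¹` preserves their order. For matches `(x, y)`, `(x', y')` with `x < x'` this forces
`y < x'`: otherwise `π⁻¹ x' < π⁻¹ y < π⁻¹ x < π⁻¹ x'`. Then `x < y < x' < y'` and
`π⁻¹ x < π⁻¹ y'`, which is `(x, y) < (x', y')`.
-/

theorem Prod.eq_of_sym2_mk_eq_of_fst_lt_snd {α : Type*} [LinearOrder α] {p q : α × α}
    (hp : p.1 < p.2) (hq : q.1 < q.2) (h : s(p.1, p.2) = s(q.1, q.2)) : p = q := by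
  rcases Sym2.eq_iff.1 h with ⟨h₁, h₂⟩ | ⟨h₁, h₂⟩
  · exact Prod.ext h₁ h₂
  · rw [h₁, h₂] at hp
    exact absurd hq hp.asymm

namespace permGraph

variable {n : ℕ} {π : Equiv.Perm (Fin n)}

theorem symm_lt_symm_of_not_adj {u v : Fin n} (h : ¬ (permGraph π).Adj u v) (huv : u < v) :
    π.symm u < π.symm v := by
  refine lt_of_le_of_ne ?_ (π.symm.injective.ne huv.ne)
  exact not_lt.1 fun hinv => h (Or.inl ⟨huv, hinv⟩)

theorem matchLT_of_fst_lt {x y x' y' : Fin n} (hp : IsMatch π x y) (hq : IsMatch π x' y')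
    (hsep : ∀ u ∈ s(x, y), ∀ v ∈ s(x', y'), u ≠ v ∧ ¬ (permGraph π).Adj u v) (hx : x < x') :
    MatchLT π (x, y) (x', y') := by
  have mono : ∀ u ∈ s(x, y), ∀ v ∈ s(x', y'), u < v → π.symm u < π.symm v :=
    fun u hu v hv => symm_lt_symm_of_not_adj (hsep u hu v hv).2
  have mono' : ∀ u ∈ s(x, y), ∀ v ∈ s(x', y'), v < u → π.symm v < π.symm u :=
    fun u hu v hv => symm_lt_symm_of_not_adj fun hadj => (hsep u hu v hv).2 hadj.symm
  have hy : y < x' := by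
    rcases lt_or_gt_of_ne (hsep y (by simp) x' (by simp)).1 with h | h
    · exact h
    · have hx'x : π.symm x' < π.symm x := (mono' y (by simp) x' (by simp) h).trans hp.2
      exact absurd (mono x (by simp) x' (by simp) hx) hx'x.asymm
  exact ⟨hy, mono x (by simp) y' (by simp) (hp.1.trans (hy.trans hq.1))⟩

end permGraph

/-- If `M` is an induced matching of `G(π)`, viewed as a set of matches, then the matches
in `M` are pairwise comparable under `MatchLT`, i.e. `M` can be ordered as a chain. -/
theorem stmt_5 {n : ℕ} (π : Equiv.Perm (Fin n)) (M : Set (Fin n × Fin n))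
    (hM : ∀ p ∈ M, IsMatch π p.1 p.2)
    (hind : IsInducedMatching (permGraph π) {s | ∃ p ∈ M, s = s(p.1, p.2)}) :
    ∀ p ∈ M, ∀ q ∈ M, p ≠ q → MatchLT π p q ∨ MatchLT π q p := by
  intro p hp q hq hpq
  have hsep : ∀ {p q}, p ∈ M → q ∈ M → p ≠ q →
      ∀ u ∈ s(p.1, p.2), ∀ v ∈ s(q.1, q.2), u ≠ v ∧ ¬ (permGraph π).Adj u v :=
    fun hp hq hpq => hind.2 _ ⟨_, hp, rfl⟩ _ ⟨_, hq, rfl⟩ fun h =>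
      hpq (Prod.eq_of_sym2_mk_eq_of_fst_lt_snd (hM _ hp).1 (hM _ hq).1 h)
  rcases lt_trichotomy p.1 q.1 with h | h | h
  · exact Or.inl (permGraph.matchLT_of_fst_lt (hM p hp) (hM q hq) (hsep hp hq hpq) h)
  · exact absurd h (hsep hp hq hpq p.1 (by simp) q.1 (by simp)).1
  · exact Or.inr (permGraph.matchLT_of_fst_lt (hM q hq) (hM p hp) (hsep hq hp hpq.symm) h)
end

section
/- Let π be a permutation of {1,...,n} and define, for each match e, f(e) as the maximum length of a chain of matches whose smallest element is e. Then the maximum of f over all matches equals the maximum size of an induced matching in G(π), and f satisfies the recurrence f(e) = 1 + max{f(e') : e < e'} (with max ∅ = 0). -/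
/-- The set of lengths of chains of matches whose smallest element is `e`. -/
def chainLengthsFrom {n : ℕ} (π : Equiv.Perm (Fin n)) (e : Fin n × Fin n) : Set ℕ :=
  {k | 1 ≤ k ∧ ∃ c : ℕ → Fin n × Fin n, c 0 = e ∧
    (∀ i < k, IsMatch π (c i).1 (c i).2) ∧
    (∀ i, i + 1 < k → MatchLT π (c i) (c (i + 1)))}

/-!
Two matches `e, e'` span an induced matching of `G(π)` exactly when they are comparable,
`e < e'` or `e' < e`: all four endpoints of the smaller one precede those of the larger one both
in position and in value. So the edge sets of induced matchings are the finite sets of pairwise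
comparable matches, and ordering such a set by left endpoints lists it as a chain. The recurrence
holds because a chain of length `k + 2` from `e` is `e` followed by a chain of length `k + 1`
from some `e' > e`.
-/

theorem Sym2.injOn_mk_setOf_fst_le {α : Type*} [LinearOrder α] :
    Set.InjOn (fun p : α × α => s(p.1, p.2)) {p | p.1 ≤ p.2} := fun p hp q hq h =>
  congrArg Subtype.val (Sym2.sortEquiv.symm.injective (a₁ := ⟨p, hp⟩) (a₂ := ⟨q, hq⟩) h)

section
variable {n : ℕ} {π : Equiv.Perm (Fin n)}

lemma permGraph_adj_iff_of_lt {u v : Fin n} (h : u < v) :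
    (permGraph π).Adj u v ↔ IsMatch π u v := by
  simp only [permGraph, IsMatch, h, true_and, not_lt_of_gt h, false_and, or_false]

lemma permGraph_ne_and_not_adj_iff {u v : Fin n} :
    (u ≠ v ∧ ¬(permGraph π).Adj u v) ↔
      (u < v ∧ π.symm u < π.symm v) ∨ (v < u ∧ π.symm v < π.symm u) := by
  have hσ := π.symm.injective.ne_iff (x := u) (y := v)
  simp only [permGraph]
  omega

lemma forall_ne_and_not_adj_iff_matchLT_or_matchLT {p q : Fin n × Fin n}
    (hp : IsMatch π p.1 p.2) (hq : IsMatch π q.1 q.2) :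
    (∀ u ∈ s(p.1, p.2), ∀ v ∈ s(q.1, q.2), u ≠ v ∧ ¬(permGraph π).Adj u v) ↔
      MatchLT π p q ∨ MatchLT π q p := by
  obtain ⟨a, b⟩ := p
  obtain ⟨c, d⟩ := q
  simp only [Sym2.mem_iff, forall_eq_or_imp, forall_eq, permGraph_ne_and_not_adj_iff]
  simp only [IsMatch, MatchLT] at *
  omega

lemma card_image_mk_of_isMatch {E : Finset (Fin n × Fin n)}
    (hE : ∀ p ∈ E, IsMatch π p.1 p.2) :
    (E.image fun p => s(p.1, p.2)).card = E.card :=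
  Finset.card_image_of_injOn <| Sym2.injOn_mk_setOf_fst_le.mono fun p hp => (hE p hp).1.le

lemma isInducedMatching_image_mk_iff {E : Finset (Fin n × Fin n)}
    (hE : ∀ p ∈ E, IsMatch π p.1 p.2) :
    IsInducedMatching (permGraph π) ↑(E.image fun p => s(p.1, p.2)) ↔
      IsChain (MatchLT π) (E : Set (Fin n × Fin n)) := by
  have hinj : Set.InjOn (fun p : Fin n × Fin n => s(p.1, p.2)) E :=
    Sym2.injOn_mk_setOf_fst_le.mono fun p hp => (hE p hp).1.le
  have hedges : ↑(E.image fun p => s(p.1, p.2)) ⊆ (permGraph π).edgeSet := by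
    rintro _ hz
    obtain ⟨p, hp, rfl⟩ := Finset.mem_image.mp hz
    exact (permGraph_adj_iff_of_lt (hE p hp).1).mpr (hE p hp)
  rw [IsInducedMatching, and_iff_right hedges, Finset.coe_image]
  simp only [Set.forall_mem_image]
  refine forall₄_congr fun p hp q hq => ?_
  rw [hinj.ne_iff hp hq]
  exact imp_congr_right fun _ =>
    forall_ne_and_not_adj_iff_matchLT_or_matchLT (hE p hp) (hE q hq)

lemma exists_isMatch_image_mk_eq {M : Finset (Sym2 (Fin n))}
    (hM : ↑M ⊆ (permGraph π).edgeSet) :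
    ∃ E : Finset (Fin n × Fin n), (∀ p ∈ E, IsMatch π p.1 p.2) ∧
      E.image (fun p => s(p.1, p.2)) = M := by
  classical
  refine ⟨Finset.univ.filter fun p : Fin n × Fin n => IsMatch π p.1 p.2 ∧ s(p.1, p.2) ∈ M,
    fun p hp => (Finset.mem_filter.mp hp).2.1,
    Finset.Subset.antisymm ?_ fun z hz => ?_⟩
  · simp only [Finset.image_subset_iff, Finset.mem_filter]
    exact fun p hp => hp.2.2
  · induction z using Sym2.ind with | h u v => ?_
    simp only [Finset.mem_image, Finset.mem_filter, Finset.mem_univ, true_and, Prod.exists]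
    rcases hM hz with huv | hvu
    · exact ⟨u, v, ⟨huv, hz⟩, rfl⟩
    · exact ⟨v, u, ⟨hvu, Sym2.eq_swap ▸ hz⟩, Sym2.eq_swap⟩

lemma MatchLT.trans {a b c : Fin n × Fin n} (hab : MatchLT π a b) (hb : IsMatch π b.1 b.2)
    (hbc : MatchLT π b c) : MatchLT π a c :=
  ⟨hab.1.trans (hb.1.trans hbc.1), hab.2.trans (hb.2.trans hbc.2)⟩

lemma MatchLT.ne {a b : Fin n × Fin n} (ha : IsMatch π a.1 a.2) (hab : MatchLT π a b) :
    a ≠ b := by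
  rintro rfl
  exact hab.1.not_gt ha.1

def IsMatchChain (π : Equiv.Perm (Fin n)) (c : ℕ → Fin n × Fin n) (k : ℕ) : Prop :=
  (∀ i < k, IsMatch π (c i).1 (c i).2) ∧ ∀ i, i + 1 < k → MatchLT π (c i) (c (i + 1))

lemma mem_chainLengthsFrom {e : Fin n × Fin n} {k : ℕ} :
    k ∈ chainLengthsFrom π e ↔ 1 ≤ k ∧ ∃ c, c 0 = e ∧ IsMatchChain π c k :=
  Iff.rfl

namespace IsMatchChain

variable {c : ℕ → Fin n × Fin n} {k : ℕ}

lemma matchLT_of_lt (hc : IsMatchChain π c k) {i j : ℕ} (hij : i < j) (hj : j < k) :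
    MatchLT π (c i) (c j) := by
  induction j, hij using Nat.le_induction with
  | base => exact hc.2 i hj
  | succ j hij ih => exact (ih (by omega)).trans (hc.1 j (by omega)) (hc.2 j hj)

lemma tail (hc : IsMatchChain π c (k + 1)) : IsMatchChain π (fun i => c (i + 1)) k :=
  ⟨fun i hi => hc.1 (i + 1) (by omega), fun i hi => hc.2 (i + 1) (by omega)⟩

lemma cons {e : Fin n × Fin n} (hc : IsMatchChain π c k) (he : IsMatch π e.1 e.2)
    (hlt : MatchLT π e (c 0)) :
    IsMatchChain π (fun | 0 => e | i + 1 => c i) (k + 1) := by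
  refine ⟨fun i hi => ?_, fun i hi => ?_⟩
  · cases i with
    | zero => exact he
    | succ i => exact hc.1 i (by omega)
  · cases i with
    | zero => exact hlt
    | succ i => exact hc.2 i (by omega)

end IsMatchChain

lemma isMatch_of_mem_chainLengthsFrom {e : Fin n × Fin n} {k : ℕ}
    (hk : k ∈ chainLengthsFrom π e) : IsMatch π e.1 e.2 := by
  obtain ⟨hk, c, rfl, hc⟩ := hk
  exact hc.1 0 hk

lemma add_one_mem_chainLengthsFrom_iff {e : Fin n × Fin n} {k : ℕ} :
    k + 1 ∈ chainLengthsFrom π e ↔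
      IsMatch π e.1 e.2 ∧
        (k = 0 ∨ ∃ e', MatchLT π e e' ∧ k ∈ chainLengthsFrom π e') := by
  simp only [mem_chainLengthsFrom]
  constructor
  · rintro ⟨-, c, rfl, hc⟩
    refine ⟨hc.1 0 (by omega), ?_⟩
    rcases Nat.eq_zero_or_pos k with rfl | hk
    · exact .inl rfl
    · exact .inr ⟨c 1, hc.2 0 (by omega), hk, _, rfl, hc.tail⟩
  · rintro ⟨he, rfl | ⟨e', hlt, hk, c, rfl, hc⟩⟩
    · exact ⟨le_rfl, fun _ => e, rfl, fun _ _ => he, fun i hi => absurd hi (by omega)⟩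
    · exact ⟨by omega, _, rfl, hc.cons he hlt⟩

lemma exists_isChain_card_eq_of_mem_chainLengthsFrom {e : Fin n × Fin n} {k : ℕ}
    (hk : k ∈ chainLengthsFrom π e) :
    ∃ E : Finset (Fin n × Fin n), (∀ p ∈ E, IsMatch π p.1 p.2) ∧
      IsChain (MatchLT π) (E : Set (Fin n × Fin n)) ∧ E.card = k := by
  obtain ⟨-, c, -, hc⟩ := mem_chainLengthsFrom.mp hk
  refine ⟨(Finset.range k).image c, ?_, ?_, ?_⟩
  · simpa only [Finset.forall_mem_image, Finset.mem_range] using hc.1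
  · rw [Finset.coe_image, Finset.coe_range]
    rintro _ ⟨i, hi : i < k, rfl⟩ _ ⟨j, hj : j < k, rfl⟩ hne
    rcases lt_trichotomy i j with h | rfl | h
    · exact .inl (hc.matchLT_of_lt h hj)
    · exact absurd rfl hne
    · exact .inr (hc.matchLT_of_lt h hi)
  · refine (Finset.card_image_of_injOn ?_).trans (Finset.card_range k)
    rw [Finset.coe_range]
    intro i (hi : i < k) j (hj : j < k) hij
    by_contra hne
    rcases Nat.lt_or_gt_of_ne hne with h | h
    · exact (hc.matchLT_of_lt h hj).ne (hc.1 i hi) hij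
    · exact (hc.matchLT_of_lt h hi).ne (hc.1 j hj) hij.symm

lemma exists_card_mem_chainLengthsFrom_of_isChain {E : Finset (Fin n × Fin n)}
    (hE : ∀ p ∈ E, IsMatch π p.1 p.2)
    (hchain : IsChain (MatchLT π) (E : Set (Fin n × Fin n))) (hne : E.Nonempty) :
    ∃ e ∈ E, E.card ∈ chainLengthsFrom π e := by
  revert hE hchain hne
  refine Finset.induction_on_min_value Prod.fst E (by simp)
    fun a E haE hmin ih hE hchain _ => ?_
  have ha := hE a (Finset.mem_insert_self a E)
  rw [Finset.card_insert_of_notMem haE]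
  rcases E.eq_empty_or_nonempty with rfl | hE'
  · exact ⟨a, Finset.mem_insert_self a _,
      add_one_mem_chainLengthsFrom_iff.mpr ⟨ha, .inl rfl⟩⟩
  obtain ⟨e, he, hk⟩ := ih (fun p hp => hE p (Finset.mem_insert_of_mem hp))
    (hchain.mono (by simp)) hE'
  -- `e < a` would put `e.1 < e.2 < a.1`, against the minimality of `a.1`
  have hae : MatchLT π a e :=
    (hchain (by simp) (by simp [he]) (ne_of_mem_of_not_mem he haE).symm).resolve_right
      fun hea => (hmin e he).not_gt ((isMatch_of_mem_chainLengthsFrom hk).1.trans hea.1)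
  exact ⟨a, Finset.mem_insert_self a E,
    add_one_mem_chainLengthsFrom_iff.mpr ⟨ha, .inr ⟨e, hae, hk⟩⟩⟩

lemma exists_isInducedMatching_card_eq_of_mem_chainLengthsFrom {e : Fin n × Fin n} {k : ℕ}
    (hk : k ∈ chainLengthsFrom π e) :
    ∃ M : Finset (Sym2 (Fin n)), IsInducedMatching (permGraph π) ↑M ∧ M.card = k := by
  obtain ⟨E, hE, hchain, rfl⟩ := exists_isChain_card_eq_of_mem_chainLengthsFrom hk
  exact ⟨_, (isInducedMatching_image_mk_iff hE).mpr hchain, card_image_mk_of_isMatch hE⟩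

lemma exists_card_mem_chainLengthsFrom_of_isInducedMatching {M : Finset (Sym2 (Fin n))}
    (hM : IsInducedMatching (permGraph π) ↑M) (hne : M.Nonempty) :
    ∃ e, M.card ∈ chainLengthsFrom π e := by
  obtain ⟨E, hE, rfl⟩ := exists_isMatch_image_mk_eq hM.1
  obtain ⟨e, -, he⟩ := exists_card_mem_chainLengthsFrom_of_isChain hE
    ((isInducedMatching_image_mk_iff hE).mp hM) (Finset.image_nonempty.mp hne)
  exact ⟨e, card_image_mk_of_isMatch hE ▸ he⟩

end

lemma bddAbove_setOf_exists_and_eq {α β : Type*} [Finite α] [SemilatticeSup β] [Nonempty β]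
    (P : α → Prop) (f : α → β) : BddAbove {b | ∃ a, P a ∧ f a = b} :=
  ((Set.finite_range f).subset <| by rintro _ ⟨a, -, rfl⟩; exact ⟨a, rfl⟩).bddAbove

theorem eq_one_add_sSup_of_isGreatest_chainLengthsFrom {n : ℕ} {π : Equiv.Perm (Fin n)}
    {f : Fin n × Fin n → ℕ}
    (hf : ∀ e : Fin n × Fin n, IsMatch π e.1 e.2 → IsGreatest (chainLengthsFrom π e) (f e))
    {e : Fin n × Fin n} (he : IsMatch π e.1 e.2) :
    f e = 1 + sSup {m | ∃ e', IsMatch π e'.1 e'.2 ∧ MatchLT π e e' ∧ f e' = m} := by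
  set S := {m | ∃ e', IsMatch π e'.1 e'.2 ∧ MatchLT π e e' ∧ f e' = m}
  have hS : BddAbove S := by
    simpa only [and_assoc] using
      bddAbove_setOf_exists_and_eq (fun e' => IsMatch π e'.1 e'.2 ∧ MatchLT π e e') f
  apply le_antisymm
  · have hmem := (hf e he).1
    obtain ⟨k, hk⟩ := Nat.exists_eq_add_of_le' hmem.1
    rw [hk] at hmem ⊢
    rcases (add_one_mem_chainLengthsFrom_iff.mp hmem).2 with rfl | ⟨e', hlt, hk'⟩
    · omega
    · have he' := isMatch_of_mem_chainLengthsFrom hk'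
      have := le_csSup hS ⟨e', he', hlt, rfl⟩
      have := (hf e' he').2 hk'
      omega
  · rcases S.eq_empty_or_nonempty with hSe | hSne
    · rw [hSe, csSup_empty]
      exact (hf e he).1.1
    · obtain ⟨e', he', hlt, hfe'⟩ := Nat.sSup_mem hSne hS
      rw [← hfe', add_comm]
      exact (hf e he).2
        (add_one_mem_chainLengthsFrom_iff.mpr ⟨he, .inr ⟨e', hlt, (hf e' he').1⟩⟩)

/-- If `f(e)` is the maximum length of a chain of matches with smallest element `e`, then
the maximum of `f` over all matches equals the maximum size of an induced matching in
`G(π)`, and `f` satisfies the recurrence `f(e) = 1 + max {f(e') : e < e'}` (with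
`max ∅ = 0`). -/
theorem stmt_19 {n : ℕ} (π : Equiv.Perm (Fin n)) (f : Fin n × Fin n → ℕ)
    (hf : ∀ e : Fin n × Fin n, IsMatch π e.1 e.2 →
      IsGreatest (chainLengthsFrom π e) (f e)) :
    (sSup {m : ℕ | ∃ e : Fin n × Fin n, IsMatch π e.1 e.2 ∧ f e = m} =
      sSup {k : ℕ | ∃ M : Finset (Sym2 (Fin n)),
        IsInducedMatching (permGraph π) ↑M ∧ M.card = k}) ∧
    (∀ e : Fin n × Fin n, IsMatch π e.1 e.2 →
      f e = 1 + sSup {m : ℕ | ∃ e' : Fin n × Fin n,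
        IsMatch π e'.1 e'.2 ∧ MatchLT π e e' ∧ f e' = m}) := by
  refine ⟨?_, fun e he => eq_one_add_sSup_of_isGreatest_chainLengthsFrom hf he⟩
  have hA := bddAbove_setOf_exists_and_eq (fun e : Fin n × Fin n => IsMatch π e.1 e.2) f
  -- `0` stands for the empty induced matching: there may be no matches at all
  rw [← zero_max (sSup _), ← csSup_insert' hA]
  refine csSup_eq_csSup_of_forall_exists_le ?_ ?_
  · rintro _ (rfl | ⟨e, he, rfl⟩)
    · exact ⟨0, ⟨∅, by simp [IsInducedMatching], rfl⟩, le_rfl⟩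
    · obtain ⟨M, hM, hcard⟩ :=
        exists_isInducedMatching_card_eq_of_mem_chainLengthsFrom (hf e he).1
      exact ⟨_, ⟨M, hM, hcard⟩, le_rfl⟩
  · rintro _ ⟨M, hM, rfl⟩
    rcases M.eq_empty_or_nonempty with rfl | hne
    · exact ⟨0, .inl rfl, le_rfl⟩
    · obtain ⟨e, he⟩ := exists_card_mem_chainLengthsFrom_of_isInducedMatching hM hne
      have he' := isMatch_of_mem_chainLengthsFrom he
      exact ⟨f e, .inr ⟨e, he', rfl⟩, (hf e he').2 he⟩
end
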